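/- Let D ⊆ E be an open convex set on which J(x) is injective and the affine covariant Lipschitz condition ‖J(y)† ∘ (J(x + t(y − x)) − J(x))‖ ≤ ω t ‖y − x‖ holds for all x, y ∈ D and t ∈ [0, 1]. Then for all x, x̂ ∈ D, the pseudoinverse-weighted residual difference satisfies ‖J(x̂)† (F(x̂) − F(x))‖ ≤ ‖x̂ − x‖ · (1 + (ω/2)·‖x̂ − x‖). -/

import Mathlib

/-!
With `d = x̂ - x`, the fundamental theorem of calculus along the segment gives
`F x̂ - F x = ∫₀¹ J(x + t d) d dt`. Since `J(x̂)† ∘ J(x̂) = id`, the integrand after applying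
`J(x̂)†` is `d - J(x̂)† (J(x̂) - J(x + t d)) d`, and the Lipschitz condition based at `x + t d`,
with parameter `1`, bounds the second term by `ω (1 - t) ‖d‖²`. Integrating gives
`‖d‖ + ω ‖d‖² / 2`.
-/

noncomputable def pinv {n m : ℕ}
    (A : EuclideanSpace ℂ (Fin n) →L[ℂ] EuclideanSpace ℂ (Fin m)) :
    EuclideanSpace ℂ (Fin m) →L[ℂ] EuclideanSpace ℂ (Fin n) :=
  (ContinuousLinearMap.inverse ((ContinuousLinearMap.adjoint A) ∘L A)) ∘L
    ContinuousLinearMap.adjoint A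

noncomputable def newtonIter {n m : ℕ}
    (F : EuclideanSpace ℂ (Fin n) → EuclideanSpace ℂ (Fin m))
    (x0 : EuclideanSpace ℂ (Fin n)) : ℕ → EuclideanSpace ℂ (Fin n)
  | 0 => x0
  | (k+1) => newtonIter F x0 k - pinv (fderiv ℂ F (newtonIter F x0 k)) (F (newtonIter F x0 k))

noncomputable def newtonStep {n m : ℕ}
    (F : EuclideanSpace ℂ (Fin n) → EuclideanSpace ℂ (Fin m))
    (x0 : EuclideanSpace ℂ (Fin n)) (k : ℕ) : EuclideanSpace ℂ (Fin n) :=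
  newtonIter F x0 (k+1) - newtonIter F x0 k

open ContinuousLinearMap intervalIntegral

section Gram

variable {𝕜 E F : Type*} [RCLike 𝕜] [NormedAddCommGroup E] [InnerProductSpace 𝕜 E]
  [CompleteSpace E] [FiniteDimensional 𝕜 E]
  [NormedAddCommGroup F] [InnerProductSpace 𝕜 F] [CompleteSpace F]

theorem isInvertible_adjoint_comp_self {A : E →L[𝕜] F} (hA : Function.Injective A) :
    (adjoint A ∘L A).IsInvertible :=
  ⟨(LinearEquiv.ofInjectiveEndo (adjoint A ∘L A : E →ₗ[𝕜] E)
    ((adjoint_comp_self_injective_iff A).2 hA)).toContinuousLinearEquiv, rfl⟩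

end Gram

theorem pinv_comp_self {n m : ℕ} {A : EuclideanSpace ℂ (Fin n) →L[ℂ] EuclideanSpace ℂ (Fin m)}
    (hA : Function.Injective A) : pinv A ∘L A = .id ℂ _ :=
  (isInvertible_adjoint_comp_self hA).inverse_comp_self

section Segment

variable {𝕜 E F : Type*} [NontriviallyNormedField 𝕜] [NormedAlgebra ℝ 𝕜]
  [NormedAddCommGroup E] [NormedSpace 𝕜 E] [NormedSpace ℝ E] [IsScalarTower ℝ 𝕜 E]
  [NormedAddCommGroup F] [NormedSpace 𝕜 F] [NormedSpace ℝ F] [IsScalarTower ℝ 𝕜 F]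
  [CompleteSpace F]

theorem ContDiff.sub_eq_integral_fderiv_segment {f : E → F} (hf : ContDiff 𝕜 1 f) (x y : E) :
    f y - f x = ∫ t in (0 : ℝ)..1, fderiv 𝕜 f (x + t • (y - x)) (y - x) := by
  have hγ : ∀ t : ℝ, HasDerivAt (fun s : ℝ => x + s • (y - x)) (y - x) t := fun t => by
    simpa using ((hasDerivAt_id t).smul_const (y - x)).const_add x
  have hderiv : ∀ t : ℝ, HasDerivAt (fun s : ℝ => f (x + s • (y - x)))
      (fderiv 𝕜 f (x + t • (y - x)) (y - x)) t := fun t =>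
    ((hf.differentiable one_ne_zero _).hasFDerivAt.restrictScalars ℝ).comp_hasDerivAt t (hγ t)
  have hcont : Continuous fun t : ℝ => fderiv 𝕜 f (x + t • (y - x)) (y - x) :=
    ((hf.continuous_fderiv one_ne_zero).comp (by fun_prop)).clm_apply continuous_const
  rw [integral_eq_sub_of_hasDerivAt (fun t _ => hderiv t) (hcont.intervalIntegrable 0 1)]
  simp

end Segment

theorem norm_integral_le_of_norm_le_add_mul_one_sub {E : Type*} [NormedAddCommGroup E]
    [NormedSpace ℝ E] {f : ℝ → E} {a b : ℝ}
    (hf : ∀ t ∈ Set.Icc (0 : ℝ) 1, ‖f t‖ ≤ a + b * (1 - t)) :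
    ‖∫ t in (0 : ℝ)..1, f t‖ ≤ a + b / 2 := by
  have hg : Continuous fun t : ℝ => b * (1 - t) := by fun_prop
  calc ‖∫ t in (0 : ℝ)..1, f t‖ ≤ ∫ t in (0 : ℝ)..1, (a + b * (1 - t)) :=
        norm_integral_le_of_norm_le zero_le_one
          (MeasureTheory.ae_of_all _ fun t ht => hf t (Set.Ioc_subset_Icc_self ht))
          ((continuous_const.add hg).intervalIntegrable 0 1)
    _ = a + b / 2 := by
      rw [integral_add intervalIntegrable_const (hg.intervalIntegrable 0 1), integral_const_mul,
        integral_sub intervalIntegrable_const intervalIntegrable_id]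
      simp
      ring

theorem norm_apply_le_add_of_comp_eq_id {𝕜 E F : Type*} [NontriviallyNormedField 𝕜]
    [SeminormedAddCommGroup E] [NormedSpace 𝕜 E] [SeminormedAddCommGroup F] [NormedSpace 𝕜 F]
    {P : F →L[𝕜] E} {A : E →L[𝕜] F} (hPA : P ∘L A = .id 𝕜 E) (B : E →L[𝕜] F) (v : E) :
    ‖P (B v)‖ ≤ ‖v‖ + ‖P ∘L (A - B)‖ * ‖v‖ := by
  have hv : P (B v) = v - (P ∘L (A - B)) v := by
    simp only [comp_apply, sub_apply, map_sub, ← comp_apply P A, hPA, id_apply, sub_sub_cancel]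
  rw [hv]
  exact (norm_sub_le _ _).trans (add_le_add_right (le_opNorm _ _) _)

theorem pinv_residual_bound_general {n m : ℕ}
    (F : EuclideanSpace ℂ (Fin n) → EuclideanSpace ℂ (Fin m)) (hF : ContDiff ℂ 1 F)
    (D : Set (EuclideanSpace ℂ (Fin n))) (hDconv : Convex ℝ D)
    (ω : ℝ)
    (hinj : ∀ x ∈ D, Function.Injective (fderiv ℂ F x))
    (hLip : ∀ x ∈ D, ∀ y ∈ D, ∀ t ∈ Set.Icc (0:ℝ) 1,
      ‖(pinv (fderiv ℂ F y)) ∘L (fderiv ℂ F (x + t • (y - x)) - fderiv ℂ F x)‖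
        ≤ ω * t * ‖y - x‖) :
    ∀ x ∈ D, ∀ xhat ∈ D,
      ‖pinv (fderiv ℂ F xhat) (F xhat - F x)‖
        ≤ ‖xhat - x‖ * (1 + ω / 2 * ‖xhat - x‖) := by
  intro x hx xhat hxhat
  set J := fderiv ℂ F
  set P := pinv (J xhat)
  set d := xhat - x
  have hbound : ∀ t ∈ Set.Icc (0 : ℝ) 1, ‖P (J (x + t • d) d)‖ ≤ ‖d‖ + ω * ‖d‖ ^ 2 * (1 - t) := by
    intro t ht
    have hdist : ‖xhat - (x + t • d)‖ = (1 - t) * ‖d‖ := by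
      rw [show xhat - (x + t • d) = (1 - t) • d by simp only [d, sub_smul, one_smul]; abel,
        norm_smul, Real.norm_of_nonneg (sub_nonneg.2 ht.2)]
    have hlip := hLip _ (hDconv.add_smul_sub_mem hx hxhat ht) xhat hxhat 1 (by simp)
    rw [one_smul, add_sub_cancel, hdist] at hlip
    calc ‖P (J (x + t • d) d)‖ ≤ ‖d‖ + ‖P ∘L (J xhat - J (x + t • d))‖ * ‖d‖ :=
          norm_apply_le_add_of_comp_eq_id (pinv_comp_self (hinj xhat hxhat)) _ d
      _ ≤ ‖d‖ + ω * 1 * ((1 - t) * ‖d‖) * ‖d‖ := by gcongr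
      _ = ‖d‖ + ω * ‖d‖ ^ 2 * (1 - t) := by ring
  have hJcont : Continuous fun t : ℝ => J (x + t • d) d := by
    have := hF.continuous_fderiv one_ne_zero
    fun_prop
  rw [hF.sub_eq_integral_fderiv_segment,
    ← P.intervalIntegral_comp_comm (hJcont.intervalIntegrable 0 1)]
  calc ‖∫ t in (0 : ℝ)..1, P (J (x + t • d) d)‖ ≤ ‖d‖ + ω * ‖d‖ ^ 2 / 2 :=
        norm_integral_le_of_norm_le_add_mul_one_sub hbound
    _ = ‖d‖ * (1 + ω / 2 * ‖d‖) := by ring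

/-- Weighted residual bound: `‖J(x̂)†(F(x̂) − F(x))‖ ≤ ‖x̂ − x‖(1 + (ω/2)‖x̂ − x‖)`. -/
theorem pinv_residual_bound {n m : ℕ} (hn : 0 < n) (hnm : n ≤ m)
    (F : EuclideanSpace ℂ (Fin n) → EuclideanSpace ℂ (Fin m)) (hF : ContDiff ℂ 1 F)
    (D : Set (EuclideanSpace ℂ (Fin n))) (hDopen : IsOpen D) (hDconv : Convex ℝ D)
    (ω : ℝ) (hω : 0 ≤ ω)
    (hinj : ∀ x ∈ D, Function.Injective (fderiv ℂ F x))
    (hLip : ∀ x ∈ D, ∀ y ∈ D, ∀ t ∈ Set.Icc (0:ℝ) 1,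
      ‖(pinv (fderiv ℂ F y)) ∘L (fderiv ℂ F (x + t • (y - x)) - fderiv ℂ F x)‖
        ≤ ω * t * ‖y - x‖) :
    ∀ x ∈ D, ∀ xhat ∈ D,
      ‖pinv (fderiv ℂ F xhat) (F xhat - F x)‖
        ≤ ‖xhat - x‖ * (1 + ω / 2 * ‖xhat - x‖) :=
  pinv_residual_bound_general F hF D hDconv ω hinj hLip
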